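/- T-rule from fixed point: let U be a set of codes with U = G(U), where G(U) is the set of codes of formulas in L(U), and suppose the base L_0(U) contains T(⌜A⌝) exactly when code(A) ∈ U and ¬T(⌜A⌝) exactly when code(¬A) ∈ U. Then for every formula A: A ∈ L(U) iff T(⌜A⌝) ∈ L(U), and ¬A ∈ L(U) iff ¬T(⌜A⌝) ∈ L(U). -/
import Mathlib


inductive TFrm : Type
  | atom : ℕ → TFrm
  | T : ℕ → TFrm
  | not : TFrm → TFrm
  | or : TFrm → TFrm → TFrm
  | and : TFrm → TFrm → TFrm
  | imp : TFrm → TFrm → TFrm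
  | iff : TFrm → TFrm → TFrm

def rules (L : Set TFrm) : Set TFrm :=
  {C | (∃ A ∈ L, C = TFrm.not (TFrm.not A)) ∨
       (∃ A B, C = TFrm.or A B ∧ ((A ∈ L ∧ B ∈ L) ∨ (A ∈ L ∧ TFrm.not B ∈ L) ∨ (TFrm.not A ∈ L ∧ B ∈ L))) ∨
       (∃ A B, C = TFrm.and A B ∧ A ∈ L ∧ B ∈ L) ∨
       (∃ A B, C = TFrm.imp A B ∧ ((TFrm.not A ∈ L ∧ B ∈ L) ∨ (TFrm.not A ∈ L ∧ TFrm.not B ∈ L) ∨ (A ∈ L ∧ B ∈ L))) ∨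
       (∃ A B, C = TFrm.iff A B ∧ ((A ∈ L ∧ B ∈ L) ∨ (TFrm.not A ∈ L ∧ TFrm.not B ∈ L))) ∨
       (∃ A B, C = TFrm.not (TFrm.or A B) ∧ TFrm.not A ∈ L ∧ TFrm.not B ∈ L) ∨
       (∃ A B, C = TFrm.not (TFrm.and A B) ∧ ((TFrm.not A ∈ L ∧ B ∈ L) ∨ (TFrm.not A ∈ L ∧ TFrm.not B ∈ L) ∨ (A ∈ L ∧ TFrm.not B ∈ L))) ∨
       (∃ A B, C = TFrm.not (TFrm.imp A B) ∧ A ∈ L ∧ TFrm.not B ∈ L) ∨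
       (∃ A B, C = TFrm.not (TFrm.iff A B) ∧ ((A ∈ L ∧ TFrm.not B ∈ L) ∨ (TFrm.not A ∈ L ∧ B ∈ L)))}

def Lev (B : Set TFrm) : ℕ → Set TFrm
  | 0 => B
  | n + 1 => Lev B n ∪ rules (Lev B n)

def limL (B : Set TFrm) : Set TFrm := ⋃ n, Lev B n

lemma notT_lev (L0 : Set TFrm) : ∀ k n, TFrm.not (TFrm.T n) ∈ Lev L0 k → TFrm.not (TFrm.T n) ∈ L0 := by
  intro k
  induction k with
  | zero => intro n h; exact h
  | succ k ih =>
    intro n h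
    rcases h with h | h
    · exact ih n h
    · rcases h with ⟨A,hA,e⟩ | ⟨A,B,e,_⟩ | ⟨A,B,e,_⟩ | ⟨A,B,e,_⟩ | ⟨A,B,e,_⟩ | ⟨A,B,e,_⟩ | ⟨A,B,e,_⟩ | ⟨A,B,e,_⟩ | ⟨A,B,e,_⟩ <;> simp_all

theorem stmt_17 (code : TFrm → ℕ) (hcode : Function.Injective code)
    (U : Set ℕ) (L0 : Set TFrm)
    (hT : ∀ A : TFrm, TFrm.T (code A) ∈ L0 ↔ code A ∈ U)
    (hnT : ∀ A : TFrm, TFrm.not (TFrm.T (code A)) ∈ L0 ↔ code (TFrm.not A) ∈ U)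
    (hUcons : ∀ A : TFrm, ¬ (code A ∈ U ∧ code (TFrm.not A) ∈ U))
    (hfix : U = {n | ∃ A ∈ limL L0, n = code A})
    (hatomic : ∀ n : ℕ, TFrm.T n ∈ limL L0 → TFrm.T n ∈ L0) :
    ∀ A : TFrm,
      (A ∈ limL L0 ↔ TFrm.T (code A) ∈ limL L0) ∧
      (TFrm.not A ∈ limL L0 ↔ TFrm.not (TFrm.T (code A)) ∈ limL L0) := by
  have hsub : L0 ⊆ limL L0 := fun A h => Set.mem_iUnion.2 ⟨0, h⟩
  have hnotT : ∀ n, TFrm.not (TFrm.T n) ∈ limL L0 → TFrm.not (TFrm.T n) ∈ L0 := by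
    intro n h
    obtain ⟨k, hk⟩ := Set.mem_iUnion.1 h
    exact notT_lev L0 k n hk
  intro A
  constructor
  · constructor
    · intro hA
      have hU : code A ∈ U := by rw [hfix]; exact ⟨A, hA, rfl⟩
      exact hsub ((hT A).2 hU)
    · intro hA
      have hU := (hT A).1 (hatomic (code A) hA)
      rw [hfix] at hU
      obtain ⟨B, hB, hBe⟩ := hU
      rw [hcode hBe]; exact hB
  · constructor
    · intro hA
      have hU : code (TFrm.not A) ∈ U := by rw [hfix]; exact ⟨_, hA, rfl⟩
      exact hsub ((hnT A).2 hU)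
    · intro hA
      have hU := (hnT A).1 (hnotT _ hA)
      rw [hfix] at hU
      obtain ⟨B, hB, hBe⟩ := hU
      rw [hcode hBe]; exact hB
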